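/- For the Kramers-Fokker-Planck quadratic symbol q(x,v,ξ,η) = η² + v²/4 + i(vξ − axη) with a ∈ ℝ \ {0}, the singular space is zero: Ker(Re F) ∩ Ker(Re F · Im F) ∩ ℝ⁴ = {0}, where F is the Hamilton map of q; in particular the smallest integer k₀ with ⋂_{j=0}^{k₀} Ker[Re F (Im F)ʲ] ∩ ℝ⁴ = {0} equals 1. -/
import Mathlib


open Matrix Complex

noncomputable section

/-- The Hamilton map of the Kramers-Fokker-Planck symbol
`q(x,v,ξ,η) = η² + v²/4 + i(vξ − axη)`, in the coordinates `(x, v, ξ, η)`. -/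
def kfpHamiltonMap (a : ℝ) : Matrix (Fin 4) (Fin 4) ℂ :=
  !![0, I / 2, 0, 0;
     -(a : ℂ) * I / 2, 0, 0, 1;
     0, 0, 0, (a : ℂ) * I / 2;
     0, -1 / 4, -I / 2, 0]

/-- Real part of the Hamilton map. -/
def kfpReF (a : ℝ) : Matrix (Fin 4) (Fin 4) ℝ := fun i j => (kfpHamiltonMap a i j).re

/-- Imaginary part of the Hamilton map. -/
def kfpImF (a : ℝ) : Matrix (Fin 4) (Fin 4) ℝ := fun i j => (kfpHamiltonMap a i j).im

end

lemma reF_eq (a : ℝ) : kfpReF a = !![0,0,0,0; 0,0,0,1; 0,0,0,0; 0,-(1/4),0,0] := by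
  ext i j
  fin_cases i <;> fin_cases j <;>
    simp [kfpReF, kfpHamiltonMap, div_eq_mul_inv, Matrix.vecHead, Matrix.vecTail, Function.comp] 

lemma imF_eq (a : ℝ) : kfpImF a = !![0,1/2,0,0; -(a/2),0,0,0; 0,0,0,a/2; 0,0,-(1/2),0] := by
  ext i j
  fin_cases i <;> fin_cases j <;>
    simp [kfpImF, kfpHamiltonMap, div_eq_mul_inv, Matrix.vecHead, Matrix.vecTail, Function.comp] 

lemma key (a : ℝ) (ha : a ≠ 0) (X : Fin 4 → ℝ)
    (h1 : (kfpReF a).mulVec X = 0)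
    (h2 : ((kfpReF a) * (kfpImF a)).mulVec X = 0) : X = 0 := by
  rw [reF_eq] at h1 h2
  rw [imF_eq] at h2
  have e1 := congrFun h1 1
  have e3 := congrFun h1 3
  have f1 := congrFun h2 1
  have f3 := congrFun h2 3
  simp [Matrix.mulVec, Matrix.mul_apply, dotProduct, Fin.sum_univ_four, Matrix.vecHead, Matrix.vecTail] at e1 e3 f1 f3
  funext i
  fin_cases i
  · show X 0 = 0
    rcases f3 with h | h
    · exact absurd h ha
    · exact h
  · exact e3
  · exact f1
  · exact e1

/-- for the Kramers-Fokker-Planck quadratic symbol with `a ≠ 0`, the singular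
space is zero: `Ker(Re F) ∩ Ker(Re F · Im F) ∩ ℝ⁴ = {0}`, and the smallest integer `k₀` with
`⋂_{j=0}^{k₀} Ker[Re F (Im F)ʲ] ∩ ℝ⁴ = {0}` equals `1`. -/
theorem stmt15 (a : ℝ) (ha : a ≠ 0) :
    ({X : Fin 4 → ℝ | (kfpReF a).mulVec X = 0 ∧ ((kfpReF a) * (kfpImF a)).mulVec X = 0} =
      {0}) ∧
    IsLeast {k : ℕ |
      {X : Fin 4 → ℝ | ∀ j ≤ k, ((kfpReF a) * (kfpImF a) ^ j).mulVec X = 0} = {0}} 1 := by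
  refine ⟨?_, ?_, ?_⟩
  · ext X
    simp only [Set.mem_setOf_eq, Set.mem_singleton_iff]
    constructor
    · rintro ⟨h1, h2⟩
      exact key a ha X h1 h2
    · rintro rfl
      simp [Matrix.mulVec_zero]
  · ext X
    simp only [Set.mem_setOf_eq, Set.mem_singleton_iff]
    constructor
    · intro h
      have h0 := h 0 (by norm_num)
      have h1 := h 1 le_rfl
      rw [pow_zero, mul_one] at h0
      rw [pow_one] at h1
      exact key a ha X h0 h1
    · rintro rfl j _
      simp [Matrix.mulVec_zero]
  · intro k hk
    rw [Nat.one_le_iff_ne_zero]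
    rintro rfl
    have hmem : (![1,0,0,0] : Fin 4 → ℝ) ∈
        {X : Fin 4 → ℝ | ∀ j ≤ 0, ((kfpReF a) * (kfpImF a) ^ j).mulVec X = 0} := by
      intro j hj
      interval_cases j
      rw [pow_zero, mul_one, reF_eq]
      funext i
      fin_cases i <;>
        simp [Matrix.mulVec, dotProduct, Fin.sum_univ_four, Matrix.vecHead, Matrix.vecTail]
    rw [hk] at hmem
    have := congrFun hmem 0
    simp at this
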